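/- Assume w is quasi-definite and that w(u)·w(v) = w(v)·w(u) for all u, v ∈ 𝕋. Then the moments pairwise commute: μ̂(i)·μ̂(j) = μ̂(j)·μ̂(i) for all i, j ∈ ℤ. Moreover, the family of all matrices {P^L_{1,n}(z₁), P^R_{1,n}(z₂), P̃^L_{2,n}(z₃), P̃^R_{2,n}(z₄) : n ≥ 0, z₁, z₂, z₃, z₄ ∈ ℂ} is pairwise commuting, and the family {α^L_{1,n}, α^R_{1,n}, (α^L_{2,n})†, (α^R_{2,n})†, H^L_n, H^R_n : n ≥ 0} is pairwise commuting. -/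

import Mathlib

open Complex Matrix

noncomputable section

/-- Normalized matrix-valued integral over the unit circle:
`∮ f(ζ) dm(ζ) := (2π)⁻¹ ∫₀^{2π} f(e^{iθ}) dθ`, taken entrywise. -/
def circInt (N : ℕ) (f : ℂ → Matrix (Fin N) (Fin N) ℂ) : Matrix (Fin N) (Fin N) ℂ :=
  Matrix.of fun i j =>
    (2 * Real.pi)⁻¹ • ∫ θ in (0:ℝ)..(2 * Real.pi), f (Complex.exp (θ * Complex.I)) i j

/-- Evaluation at `z` of the matrix polynomial with coefficients `c 0, …, c n`. -/
def mPolyEval {N : ℕ} (c : ℕ → Matrix (Fin N) (Fin N) ℂ) (n : ℕ) (z : ℂ) :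
    Matrix (Fin N) (Fin N) ℂ :=
  ∑ k ∈ Finset.range (n + 1), z ^ k • c k

/-- Evaluation at `z` of the reciprocal polynomial `P̃(z) = ∑_{k=0}^n (c (n-k))ᴴ z^k`. -/
def mRecipEval {N : ℕ} (c : ℕ → Matrix (Fin N) (Fin N) ℂ) (n : ℕ) (z : ℂ) :
    Matrix (Fin N) (Fin N) ℂ :=
  ∑ k ∈ Finset.range (n + 1), z ^ k • (c (n - k))ᴴ

/-- The `j`-th moment `μ̂ j = ∮ w(ζ) ζ^{-j} dm(ζ)` of the matrix weight `w`. -/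
def mMoment (N : ℕ) (w : ℂ → Matrix (Fin N) (Fin N) ℂ) (j : ℤ) : Matrix (Fin N) (Fin N) ℂ :=
  circInt N fun ζ => ζ ^ (-j) • w ζ

/-- Quasi-definiteness: all the truncated block Toeplitz moment matrices
`M^L_[n]` and `M^R_[n]` are invertible. -/
def QuasiDef (N : ℕ) (w : ℂ → Matrix (Fin N) (Fin N) ℂ) : Prop :=
  ∀ n : ℕ, 1 ≤ n →
    IsUnit (Matrix.of fun p q : Fin n × Fin N =>
      mMoment N w ((p.1 : ℤ) - (q.1 : ℤ)) p.2 q.2) ∧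
    IsUnit (Matrix.of fun p q : Fin n × Fin N =>
      mMoment N w ((q.1 : ℤ) - (p.1 : ℤ)) p.2 q.2)

/-- `P n` lists the coefficients of the monic degree-`n` Szegő polynomial `P^L_{1,n}`:
monicity together with `∮ P^L_{1,n}(ζ) w(ζ) ζ^{-j} dm(ζ) = 0` for `j = 0,…,n-1`. -/
def IsSzPL1 (N : ℕ) (w : ℂ → Matrix (Fin N) (Fin N) ℂ)
    (P : ℕ → ℕ → Matrix (Fin N) (Fin N) ℂ) : Prop :=
  ∀ n : ℕ, P n n = 1 ∧ (∀ k, n < k → P n k = 0) ∧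
    ∀ j < n, circInt N (fun ζ => ζ ^ (-(j : ℤ)) • (mPolyEval (P n) n ζ * w ζ)) = 0

/-- `P n` lists the coefficients of the monic degree-`n` Szegő polynomial `P^R_{1,n}`:
monicity together with `∮ ζ^{-j} w(ζ) P^R_{1,n}(ζ) dm(ζ) = 0` for `j = 0,…,n-1`. -/
def IsSzPR1 (N : ℕ) (w : ℂ → Matrix (Fin N) (Fin N) ℂ)
    (P : ℕ → ℕ → Matrix (Fin N) (Fin N) ℂ) : Prop :=
  ∀ n : ℕ, P n n = 1 ∧ (∀ k, n < k → P n k = 0) ∧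
    ∀ j < n, circInt N (fun ζ => ζ ^ (-(j : ℤ)) • (w ζ * mPolyEval (P n) n ζ)) = 0

/-- `P n` lists the coefficients of the monic degree-`n` Szegő polynomial `P^L_{2,n}`:
monicity together with `∮ ζ^{j} w(ζ) (P^L_{2,n}(ζ))† dm(ζ) = 0` for `j = 0,…,n-1`. -/
def IsSzPL2 (N : ℕ) (w : ℂ → Matrix (Fin N) (Fin N) ℂ)
    (P : ℕ → ℕ → Matrix (Fin N) (Fin N) ℂ) : Prop :=
  ∀ n : ℕ, P n n = 1 ∧ (∀ k, n < k → P n k = 0) ∧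
    ∀ j < n, circInt N (fun ζ => ζ ^ j • (w ζ * (mPolyEval (P n) n ζ)ᴴ)) = 0

/-- `P n` lists the coefficients of the monic degree-`n` Szegő polynomial `P^R_{2,n}`:
monicity together with `∮ (P^R_{2,n}(ζ))† w(ζ) ζ^{j} dm(ζ) = 0` for `j = 0,…,n-1`. -/
def IsSzPR2 (N : ℕ) (w : ℂ → Matrix (Fin N) (Fin N) ℂ)
    (P : ℕ → ℕ → Matrix (Fin N) (Fin N) ℂ) : Prop :=
  ∀ n : ℕ, P n n = 1 ∧ (∀ k, n < k → P n k = 0) ∧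
    ∀ j < n, circInt N (fun ζ => ζ ^ j • ((mPolyEval (P n) n ζ)ᴴ * w ζ)) = 0

/-- The Verblunsky matrix of the family `P`: the value at `0` of its `n`-th member. -/
def szVer {N : ℕ} (P : ℕ → ℕ → Matrix (Fin N) (Fin N) ℂ) (n : ℕ) :
    Matrix (Fin N) (Fin N) ℂ :=
  mPolyEval (P n) n 0

/-- Quasi-tau matrix `H^L_n = ∮ P^L_{1,n}(ζ) w(ζ) ζ^{-n} dm(ζ)` (from the family `P^L_{1,·}`). -/
def szHL (N : ℕ) (w : ℂ → Matrix (Fin N) (Fin N) ℂ)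
    (P : ℕ → ℕ → Matrix (Fin N) (Fin N) ℂ) (n : ℕ) : Matrix (Fin N) (Fin N) ℂ :=
  circInt N fun ζ => ζ ^ (-(n : ℤ)) • (mPolyEval (P n) n ζ * w ζ)

/-- Quasi-tau matrix `H^R_n = ∮ ζ^{-n} w(ζ) P^R_{1,n}(ζ) dm(ζ)` (from the family `P^R_{1,·}`). -/
def szHR (N : ℕ) (w : ℂ → Matrix (Fin N) (Fin N) ℂ)
    (P : ℕ → ℕ → Matrix (Fin N) (Fin N) ℂ) (n : ℕ) : Matrix (Fin N) (Fin N) ℂ :=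
  circInt N fun ζ => ζ ^ (-(n : ℤ)) • (w ζ * mPolyEval (P n) n ζ)

/-- Cauchy transform `Q^L_{1,n}(z) = ∮ ζ^{-n} P^L_{1,n}(ζ) w(ζ) (1-ζ^{-1}z)^{-1} dm(ζ)`. -/
def szQL1 (N : ℕ) (w : ℂ → Matrix (Fin N) (Fin N) ℂ)
    (P : ℕ → ℕ → Matrix (Fin N) (Fin N) ℂ) (n : ℕ) (z : ℂ) : Matrix (Fin N) (Fin N) ℂ :=
  circInt N fun ζ => (ζ ^ (-(n : ℤ)) * (1 - ζ⁻¹ * z)⁻¹) • (mPolyEval (P n) n ζ * w ζ)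

/-- Cauchy transform `Q^R_{2,n}(z) = ∮ ζ^{-(n+1)} P̃^R_{2,n}(ζ) w(ζ) (1-ζ^{-1}z)^{-1} dm(ζ)`. -/
def szQR2 (N : ℕ) (w : ℂ → Matrix (Fin N) (Fin N) ℂ)
    (P : ℕ → ℕ → Matrix (Fin N) (Fin N) ℂ) (n : ℕ) (z : ℂ) : Matrix (Fin N) (Fin N) ℂ :=
  circInt N fun ζ => (ζ ^ (-((n : ℤ) + 1)) * (1 - ζ⁻¹ * z)⁻¹) • (mRecipEval (P n) n ζ * w ζ)

/-! Let `W` be the set of values of `w` on the unit circle. A matrix commuting with `W` commutes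
with every moment, the moments being integrals of scalar multiples of elements of `W`; so the
moments lie in the bicommutant `W''`, which is a commutative algebra because `W` is commutative.
Orthogonality turns the lower coefficients of each Szegő polynomial into the solution of a block
Toeplitz system whose blocks are moments and whose matrix is invertible by quasi-definiteness.
If `T` commutes with the moments, the commutators `T c_k - c_k T` solve the homogeneous system
and therefore vanish. Hence all coefficients, and with them every matrix in the statement,
lie in `W''`. -/

open Finset

section BlockSystems

variable {R κ ι : Type*} [CommRing R] [Fintype κ] [DecidableEq κ] [Fintype ι] [DecidableEq ι]

theorem Matrix.eq_zero_of_sum_mul_blocks_eq_zero {B : ι → ι → Matrix κ κ R}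
    (hB : IsUnit (Matrix.of fun p q : ι × κ => B p.1 q.1 p.2 q.2)) {Q : ι → Matrix κ κ R}
    (h : ∀ j, ∑ k, Q k * B k j = 0) (k : ι) : Q k = 0 := by
  set M := Matrix.of fun p q : ι × κ => B p.1 q.1 p.2 q.2
  let V : Matrix κ (ι × κ) R := Matrix.of fun a q => Q q.1 a q.2
  have hVM : V * M = 0 := by
    ext a ⟨j, b⟩
    simpa [V, M, mul_apply, Fintype.sum_prod_type, Matrix.sum_apply] using
      congr_fun₂ (h j) a b
  have hV : V = 0 := by
    rw [← Matrix.mul_one V, ← Matrix.mul_nonsing_inv M ((isUnit_iff_isUnit_det M).mp hB),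
      ← Matrix.mul_assoc, hVM, Matrix.zero_mul]
  ext a b
  exact congr_fun₂ hV a (k, b)

theorem Matrix.eq_zero_of_sum_blocks_mul_eq_zero {B : ι → ι → Matrix κ κ R}
    (hB : IsUnit (Matrix.of fun p q : ι × κ => B p.1 q.1 p.2 q.2)) {Q : ι → Matrix κ κ R}
    (h : ∀ j, ∑ k, B j k * Q k = 0) (k : ι) : Q k = 0 := by
  have hBt : IsUnit (Matrix.of fun p q : ι × κ => (B q.1 p.1)ᵀ p.2 q.2) :=
    (Matrix.of fun p q : ι × κ => B p.1 q.1 p.2 q.2).isUnit_transpose.mpr hB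
  refine transpose_eq_zero.mp
    (eq_zero_of_sum_mul_blocks_eq_zero (B := fun k j => (B j k)ᵀ) (Q := fun k => (Q k)ᵀ) hBt
      (fun j => ?_) k)
  rw [← transpose_zero, ← h j, transpose_sum]
  simp only [transpose_mul]

variable {X : Set (Matrix κ κ R)} {n : ℕ} {c : ℕ → Matrix κ κ R} {B : ℕ → ℕ → Matrix κ κ R}

theorem mem_centralizer_of_sum_mul_blocks_eq_zero (hB : ∀ k j, B k j ∈ X.centralizer)
    (hunit : IsUnit (Matrix.of fun p q : Fin n × κ => B p.1 q.1 p.2 q.2))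
    (hc : c n ∈ X.centralizer) (hsys : ∀ j < n, ∑ k ∈ range (n + 1), c k * B k j = 0)
    {k : ℕ} (hk : k < n) : c k ∈ X.centralizer := by
  intro T hT
  have hhom : ∀ j < n, ∑ k ∈ range n, (T * c k - c k * T) * B k j = 0 := fun j hj =>
    calc ∑ k ∈ range n, (T * c k - c k * T) * B k j
        = ∑ k ∈ range (n + 1), (T * c k - c k * T) * B k j := by
          rw [sum_range_succ, hc T hT, sub_self, zero_mul, add_zero]
      _ = T * ∑ k ∈ range (n + 1), c k * B k j - (∑ k ∈ range (n + 1), c k * B k j) * T := by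
          simp only [sub_mul, sum_sub_distrib, mul_sum, sum_mul, mul_assoc, hB _ _ T hT]
      _ = 0 := by rw [hsys j hj, mul_zero, zero_mul, sub_zero]
  refine sub_eq_zero.mp (eq_zero_of_sum_mul_blocks_eq_zero (B := fun k j : Fin n => B k j) hunit
    (Q := fun k : Fin n => T * c k - c k * T) (fun j => ?_) ⟨k, hk⟩)
  rw [Fin.sum_univ_eq_sum_range (fun k => (T * c k - c k * T) * B k j)]
  exact hhom j j.2

theorem mem_centralizer_of_sum_blocks_mul_eq_zero (hB : ∀ k j, B k j ∈ X.centralizer)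
    (hunit : IsUnit (Matrix.of fun p q : Fin n × κ => B p.1 q.1 p.2 q.2))
    (hc : c n ∈ X.centralizer) (hsys : ∀ j < n, ∑ k ∈ range (n + 1), B j k * c k = 0)
    {k : ℕ} (hk : k < n) : c k ∈ X.centralizer := by
  intro T hT
  have hhom : ∀ j < n, ∑ k ∈ range n, B j k * (T * c k - c k * T) = 0 := fun j hj =>
    calc ∑ k ∈ range n, B j k * (T * c k - c k * T)
        = ∑ k ∈ range (n + 1), B j k * (T * c k - c k * T) := by
          rw [sum_range_succ, hc T hT, sub_self, mul_zero, add_zero]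
      _ = T * ∑ k ∈ range (n + 1), B j k * c k - (∑ k ∈ range (n + 1), B j k * c k) * T := by
          simp only [mul_sub, sum_sub_distrib, mul_sum, sum_mul, ← mul_assoc, hB _ _ T hT]
      _ = 0 := by rw [hsys j hj, mul_zero, zero_mul, sub_zero]
  refine sub_eq_zero.mp (eq_zero_of_sum_blocks_mul_eq_zero (B := fun k j : Fin n => B k j) hunit
    (Q := fun k : Fin n => T * c k - c k * T) (fun j => ?_) ⟨k, hk⟩)
  rw [Fin.sum_univ_eq_sum_range (fun k => B j k * (T * c k - c k * T))]
  exact hhom j j.2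

end BlockSystems

section CircleIntegral

variable {N : ℕ}

def CircIntegrable (N : ℕ) (f : ℂ → Matrix (Fin N) (Fin N) ℂ) : Prop :=
  ∀ i j, IntervalIntegrable (fun θ : ℝ => f (exp (θ * I)) i j) MeasureTheory.volume 0
    (2 * Real.pi)

theorem CircIntegrable.const_mul {f : ℂ → Matrix (Fin N) (Fin N) ℂ} (hf : CircIntegrable N f)
    (C : Matrix (Fin N) (Fin N) ℂ) : CircIntegrable N fun ζ => C * f ζ := fun i j => by
  simpa only [mul_apply, sum_fn] using IntervalIntegrable.sum univ fun l _ =>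
    (hf l j).const_mul (C i l)

theorem CircIntegrable.mul_const {f : ℂ → Matrix (Fin N) (Fin N) ℂ} (hf : CircIntegrable N f)
    (C : Matrix (Fin N) (Fin N) ℂ) : CircIntegrable N fun ζ => f ζ * C := fun i j => by
  simpa only [mul_apply, sum_fn] using IntervalIntegrable.sum univ fun l _ =>
    (hf i l).mul_const (C l j)

theorem circInt_congr {f g : ℂ → Matrix (Fin N) (Fin N) ℂ} (h : ∀ ζ, ‖ζ‖ = 1 → f ζ = g ζ) :
    circInt N f = circInt N g := by
  ext i j
  simp only [circInt, of_apply]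
  congr 1
  refine intervalIntegral.integral_congr fun θ _ => ?_
  simp only [h _ (norm_exp_ofReal_mul_I θ)]

theorem circInt_sum {ι : Type*} (s : Finset ι) {f : ι → ℂ → Matrix (Fin N) (Fin N) ℂ}
    (hf : ∀ k ∈ s, CircIntegrable N (f k)) :
    circInt N (fun ζ => ∑ k ∈ s, f k ζ) = ∑ k ∈ s, circInt N (f k) := by
  ext i j
  simp only [circInt, of_apply, Matrix.sum_apply]
  rw [← smul_sum, ← intervalIntegral.integral_finsetSum fun k hk => hf k hk i j]

theorem circInt_const_mul {f : ℂ → Matrix (Fin N) (Fin N) ℂ} (hf : CircIntegrable N f)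
    (C : Matrix (Fin N) (Fin N) ℂ) : circInt N (fun ζ => C * f ζ) = C * circInt N f := by
  ext i j
  simp only [circInt, of_apply, mul_apply, mul_smul_comm,
    ← intervalIntegral.integral_const_mul]
  rw [← smul_sum, ← intervalIntegral.integral_finsetSum
    fun l _ => (hf l j).const_mul _]

theorem circInt_mul_const {f : ℂ → Matrix (Fin N) (Fin N) ℂ} (hf : CircIntegrable N f)
    (C : Matrix (Fin N) (Fin N) ℂ) : circInt N (fun ζ => f ζ * C) = circInt N f * C := by
  ext i j
  simp only [circInt, of_apply, mul_apply, smul_mul_assoc,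
    ← intervalIntegral.integral_mul_const]
  rw [← smul_sum, ← intervalIntegral.integral_finsetSum
    fun l _ => (hf i l).mul_const _]

theorem circInt_mem_centralizer {X : Set (Matrix (Fin N) (Fin N) ℂ)}
    {f : ℂ → Matrix (Fin N) (Fin N) ℂ} (hf : CircIntegrable N f)
    (h : ∀ ζ, ‖ζ‖ = 1 → f ζ ∈ X.centralizer) : circInt N f ∈ X.centralizer := fun T hT => by
  rw [← circInt_const_mul hf, ← circInt_mul_const hf]
  exact circInt_congr fun ζ hζ => h ζ hζ T hT

end CircleIntegral

section Weight

variable {N : ℕ} {w : ℂ → Matrix (Fin N) (Fin N) ℂ}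

theorem circIntegrable_zpow_smul (hw : Continuous w) (m : ℤ) :
    CircIntegrable N fun ζ => ζ ^ m • w ζ := fun i j => by
  have hexp : Continuous fun θ : ℝ => exp (θ * I) := by fun_prop
  exact (((hexp.zpow₀ m fun _ => Or.inl (exp_ne_zero _)).smul (hw.comp hexp)).matrix_elem i j
    ).intervalIntegrable _ _

def weightBicommutant (N : ℕ) (w : ℂ → Matrix (Fin N) (Fin N) ℂ) :
    Subalgebra ℂ (Matrix (Fin N) (Fin N) ℂ) :=
  Subalgebra.centralizer ℂ (w '' Metric.sphere 0 1).centralizer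

theorem mMoment_mem_weightBicommutant (hw : Continuous w) (j : ℤ) :
    mMoment N w j ∈ weightBicommutant N w :=
  circInt_mem_centralizer (circIntegrable_zpow_smul hw _) fun ζ hζ =>
    Set.smul_mem_centralizer _ (Set.subset_centralizer_centralizer
      ⟨ζ, mem_sphere_zero_iff_norm.mpr hζ, rfl⟩)

theorem weightBicommutant_comm (hcomm : ∀ u v : ℂ, ‖u‖ = 1 → ‖v‖ = 1 → w u * w v = w v * w u)
    {X Y : Matrix (Fin N) (Fin N) ℂ} (hX : X ∈ weightBicommutant N w)
    (hY : Y ∈ weightBicommutant N w) : X * Y = Y * X := by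
  refine Set.centralizer_centralizer_comm_of_comm ?_ X hX Y hY
  rintro _ ⟨u, hu, rfl⟩ _ ⟨v, hv, rfl⟩
  exact hcomm u v (mem_sphere_zero_iff_norm.mp hu) (mem_sphere_zero_iff_norm.mp hv)

end Weight

section Orthogonality

open scoped ComplexConjugate

variable {N : ℕ} {w : ℂ → Matrix (Fin N) (Fin N) ℂ}

theorem conjTranspose_mPolyEval (c : ℕ → Matrix (Fin N) (Fin N) ℂ) (n : ℕ) (z : ℂ) :
    (mPolyEval c n z)ᴴ = mPolyEval (fun k => (c k)ᴴ) n (conj z) := by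
  simp [mPolyEval, conjTranspose_sum, conjTranspose_smul]

theorem circInt_sum_mul_mMoment (hw : Continuous w) {ι : Type*} (s : Finset ι)
    (A : ι → Matrix (Fin N) (Fin N) ℂ) (e : ι → ℤ) :
    circInt N (fun ζ => ∑ k ∈ s, A k * (ζ ^ (-e k) • w ζ))
      = ∑ k ∈ s, A k * mMoment N w (e k) := by
  rw [circInt_sum s fun k _ => (circIntegrable_zpow_smul hw _).const_mul _]
  exact sum_congr rfl fun k _ => circInt_const_mul (circIntegrable_zpow_smul hw _) _

theorem circInt_sum_mMoment_mul (hw : Continuous w) {ι : Type*} (s : Finset ι)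
    (A : ι → Matrix (Fin N) (Fin N) ℂ) (e : ι → ℤ) :
    circInt N (fun ζ => ∑ k ∈ s, (ζ ^ (-e k) • w ζ) * A k)
      = ∑ k ∈ s, mMoment N w (e k) * A k := by
  rw [circInt_sum s fun k _ => (circIntegrable_zpow_smul hw _).mul_const _]
  exact sum_congr rfl fun k _ => circInt_mul_const (circIntegrable_zpow_smul hw _) _

theorem zpow_neg_mul_pow {G₀ : Type*} [GroupWithZero G₀] {a : G₀} (ha : a ≠ 0) (j : ℤ) (k : ℕ) :
    a ^ (-j) * a ^ k = a ^ (-(j - k)) := by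
  rw [← zpow_natCast, ← zpow_add₀ ha, neg_sub, neg_add_eq_sub]

theorem pow_mul_inv_pow {G₀ : Type*} [GroupWithZero G₀] {a : G₀} (ha : a ≠ 0) (j k : ℕ) :
    a ^ j * a⁻¹ ^ k = a ^ (-((k : ℤ) - j)) := by
  rw [neg_sub, zpow_sub₀ ha, zpow_natCast, zpow_natCast, div_eq_mul_inv, inv_pow]

theorem circInt_zpow_smul_mPolyEval_mul (hw : Continuous w) (c : ℕ → Matrix (Fin N) (Fin N) ℂ)
    (n : ℕ) (j : ℤ) :
    circInt N (fun ζ => ζ ^ (-j) • (mPolyEval c n ζ * w ζ))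
      = ∑ k ∈ range (n + 1), c k * mMoment N w (j - k) := by
  rw [← circInt_sum_mul_mMoment hw]
  refine circInt_congr fun ζ hζ => ?_
  have hζ0 : ζ ≠ 0 := norm_ne_zero_iff.mp (hζ ▸ one_ne_zero)
  simp only [mPolyEval, sum_mul, smul_sum, smul_mul_assoc, smul_smul, mul_smul_comm,
    zpow_neg_mul_pow hζ0]

theorem circInt_zpow_smul_mul_mPolyEval (hw : Continuous w) (c : ℕ → Matrix (Fin N) (Fin N) ℂ)
    (n : ℕ) (j : ℤ) :
    circInt N (fun ζ => ζ ^ (-j) • (w ζ * mPolyEval c n ζ))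
      = ∑ k ∈ range (n + 1), mMoment N w (j - k) * c k := by
  rw [← circInt_sum_mMoment_mul hw]
  refine circInt_congr fun ζ hζ => ?_
  have hζ0 : ζ ≠ 0 := norm_ne_zero_iff.mp (hζ ▸ one_ne_zero)
  simp only [mPolyEval, mul_sum, smul_sum, mul_smul_comm, smul_mul_assoc, smul_smul,
    zpow_neg_mul_pow hζ0]

theorem circInt_pow_smul_mul_conjTranspose_mPolyEval (hw : Continuous w)
    (c : ℕ → Matrix (Fin N) (Fin N) ℂ) (n j : ℕ) :
    circInt N (fun ζ => ζ ^ j • (w ζ * (mPolyEval c n ζ)ᴴ))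
      = ∑ k ∈ range (n + 1), mMoment N w (k - j) * (c k)ᴴ := by
  rw [← circInt_sum_mMoment_mul hw]
  refine circInt_congr fun ζ hζ => ?_
  have hζ0 : ζ ≠ 0 := norm_ne_zero_iff.mp (hζ ▸ one_ne_zero)
  rw [conjTranspose_mPolyEval, ← inv_eq_conj hζ]
  simp only [mPolyEval, mul_sum, smul_sum, mul_smul_comm, smul_mul_assoc, smul_smul,
    pow_mul_inv_pow hζ0]

theorem circInt_pow_smul_conjTranspose_mPolyEval_mul (hw : Continuous w)
    (c : ℕ → Matrix (Fin N) (Fin N) ℂ) (n j : ℕ) :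
    circInt N (fun ζ => ζ ^ j • ((mPolyEval c n ζ)ᴴ * w ζ))
      = ∑ k ∈ range (n + 1), (c k)ᴴ * mMoment N w (k - j) := by
  rw [← circInt_sum_mul_mMoment hw]
  refine circInt_congr fun ζ hζ => ?_
  have hζ0 : ζ ≠ 0 := norm_ne_zero_iff.mp (hζ ▸ one_ne_zero)
  rw [conjTranspose_mPolyEval, ← inv_eq_conj hζ]
  simp only [mPolyEval, sum_mul, smul_sum, smul_mul_assoc, smul_smul, mul_smul_comm,
    pow_mul_inv_pow hζ0]

end Orthogonality

theorem Subalgebra.coeff_mem_of_monic {R A : Type*} [CommSemiring R] [Semiring A] [Algebra R A]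
    {S : Subalgebra R A} {c : ℕ → A} {n : ℕ} (hmonic : c n = 1) (hdeg : ∀ k, n < k → c k = 0)
    (hlt : ∀ k < n, c k ∈ S) (k : ℕ) : c k ∈ S := by
  rcases lt_trichotomy k n with hk | rfl | hk
  · exact hlt k hk
  · exact hmonic ▸ S.one_mem
  · exact hdeg k hk ▸ S.zero_mem

section Szego

variable {N : ℕ} {w : ℂ → Matrix (Fin N) (Fin N) ℂ} {P : ℕ → ℕ → Matrix (Fin N) (Fin N) ℂ}

theorem IsSzPL1.coeff_mem (hP : IsSzPL1 N w P) (hw : Continuous w) (hqd : QuasiDef N w)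
    (n k : ℕ) : P n k ∈ weightBicommutant N w := by
  obtain ⟨hmonic, hdeg, horth⟩ := hP n
  refine Subalgebra.coeff_mem_of_monic hmonic hdeg (fun k hk => ?_) k
  refine mem_centralizer_of_sum_mul_blocks_eq_zero (B := fun k j => mMoment N w (j - k))
    (fun _ _ => mMoment_mem_weightBicommutant hw _) (hqd n (by omega)).2
    (hmonic ▸ Set.one_mem_centralizer) (fun j hj => ?_) hk
  rw [← circInt_zpow_smul_mPolyEval_mul hw]
  exact horth j hj

theorem IsSzPR1.coeff_mem (hP : IsSzPR1 N w P) (hw : Continuous w) (hqd : QuasiDef N w)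
    (n k : ℕ) : P n k ∈ weightBicommutant N w := by
  obtain ⟨hmonic, hdeg, horth⟩ := hP n
  refine Subalgebra.coeff_mem_of_monic hmonic hdeg (fun k hk => ?_) k
  refine mem_centralizer_of_sum_blocks_mul_eq_zero (B := fun j k => mMoment N w (j - k))
    (fun _ _ => mMoment_mem_weightBicommutant hw _) (hqd n (by omega)).1
    (hmonic ▸ Set.one_mem_centralizer) (fun j hj => ?_) hk
  rw [← circInt_zpow_smul_mul_mPolyEval hw]
  exact horth j hj

theorem IsSzPL2.conjTranspose_coeff_mem (hP : IsSzPL2 N w P) (hw : Continuous w)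
    (hqd : QuasiDef N w) (n k : ℕ) : (P n k)ᴴ ∈ weightBicommutant N w := by
  obtain ⟨hmonic, hdeg, horth⟩ := hP n
  have hmonic' : (P n n)ᴴ = 1 := by rw [hmonic, conjTranspose_one]
  refine Subalgebra.coeff_mem_of_monic (c := fun k => (P n k)ᴴ) hmonic'
    (fun k hk => by rw [hdeg k hk, conjTranspose_zero]) (fun k hk => ?_) k
  refine mem_centralizer_of_sum_blocks_mul_eq_zero (c := fun k => (P n k)ᴴ)
    (B := fun j k => mMoment N w (k - j))
    (fun _ _ => mMoment_mem_weightBicommutant hw _) (hqd n (by omega)).2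
    (hmonic' ▸ Set.one_mem_centralizer) (fun j hj => ?_) hk
  rw [← circInt_pow_smul_mul_conjTranspose_mPolyEval hw]
  exact horth j hj

theorem IsSzPR2.conjTranspose_coeff_mem (hP : IsSzPR2 N w P) (hw : Continuous w)
    (hqd : QuasiDef N w) (n k : ℕ) : (P n k)ᴴ ∈ weightBicommutant N w := by
  obtain ⟨hmonic, hdeg, horth⟩ := hP n
  have hmonic' : (P n n)ᴴ = 1 := by rw [hmonic, conjTranspose_one]
  refine Subalgebra.coeff_mem_of_monic (c := fun k => (P n k)ᴴ) hmonic'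
    (fun k hk => by rw [hdeg k hk, conjTranspose_zero]) (fun k hk => ?_) k
  refine mem_centralizer_of_sum_mul_blocks_eq_zero (c := fun k => (P n k)ᴴ)
    (B := fun k j => mMoment N w (k - j))
    (fun _ _ => mMoment_mem_weightBicommutant hw _) (hqd n (by omega)).1
    (hmonic' ▸ Set.one_mem_centralizer) (fun j hj => ?_) hk
  rw [← circInt_pow_smul_conjTranspose_mPolyEval_mul hw]
  exact horth j hj

end Szego

section Evaluations

variable {N : ℕ} {S : Subalgebra ℂ (Matrix (Fin N) (Fin N) ℂ)} {c : ℕ → Matrix (Fin N) (Fin N) ℂ}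

theorem mPolyEval_mem (h : ∀ k, c k ∈ S) (n : ℕ) (z : ℂ) : mPolyEval c n z ∈ S :=
  S.sum_mem fun k _ => S.smul_mem (h k) _

theorem mRecipEval_mem (h : ∀ k, (c k)ᴴ ∈ S) (n : ℕ) (z : ℂ) : mRecipEval c n z ∈ S :=
  S.sum_mem fun _ _ => S.smul_mem (h _) _

theorem conjTranspose_szVer_mem {P : ℕ → ℕ → Matrix (Fin N) (Fin N) ℂ} {n : ℕ}
    (h : ∀ k, (P n k)ᴴ ∈ S) : (szVer P n)ᴴ ∈ S := by
  rw [szVer, conjTranspose_mPolyEval]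
  exact mPolyEval_mem h n _

end Evaluations

section QuasiTau

variable {N : ℕ} {w : ℂ → Matrix (Fin N) (Fin N) ℂ} {P : ℕ → ℕ → Matrix (Fin N) (Fin N) ℂ}

theorem szHL_mem (hw : Continuous w) {n : ℕ} (h : ∀ k, P n k ∈ weightBicommutant N w) :
    szHL N w P n ∈ weightBicommutant N w := by
  rw [szHL, circInt_zpow_smul_mPolyEval_mul hw]
  exact Subalgebra.sum_mem _ fun k _ => mul_mem (h k) (mMoment_mem_weightBicommutant hw _)

theorem szHR_mem (hw : Continuous w) {n : ℕ} (h : ∀ k, P n k ∈ weightBicommutant N w) :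
    szHR N w P n ∈ weightBicommutant N w := by
  rw [szHR, circInt_zpow_smul_mul_mPolyEval hw]
  exact Subalgebra.sum_mem _ fun k _ => mul_mem (mMoment_mem_weightBicommutant hw _) (h k)

end QuasiTau

theorem statement5_general {N : ℕ} (w : ℂ → Matrix (Fin N) (Fin N) ℂ)
    (hw : Continuous w) (hqd : QuasiDef N w)
    (PL1 PR1 PL2 PR2 : ℕ → ℕ → Matrix (Fin N) (Fin N) ℂ)
    (hPL1 : IsSzPL1 N w PL1) (hPR1 : IsSzPR1 N w PR1)
    (hPL2 : IsSzPL2 N w PL2) (hPR2 : IsSzPR2 N w PR2)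
    (hcomm : ∀ u v : ℂ, ‖u‖ = 1 → ‖v‖ = 1 → w u * w v = w v * w u) :
    (∀ i j : ℤ, mMoment N w i * mMoment N w j = mMoment N w j * mMoment N w i) ∧
    (∀ A B : Matrix (Fin N) (Fin N) ℂ,
      (∃ n : ℕ, ∃ z : ℂ, A = mPolyEval (PL1 n) n z ∨ A = mPolyEval (PR1 n) n z ∨
        A = mRecipEval (PL2 n) n z ∨ A = mRecipEval (PR2 n) n z) →
      (∃ n : ℕ, ∃ z : ℂ, B = mPolyEval (PL1 n) n z ∨ B = mPolyEval (PR1 n) n z ∨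
        B = mRecipEval (PL2 n) n z ∨ B = mRecipEval (PR2 n) n z) →
      A * B = B * A) ∧
    (∀ A B : Matrix (Fin N) (Fin N) ℂ,
      (∃ n : ℕ, A = szVer PL1 n ∨ A = szVer PR1 n ∨ A = (szVer PL2 n)ᴴ ∨
        A = (szVer PR2 n)ᴴ ∨ A = szHL N w PL1 n ∨ A = szHR N w PR1 n) →
      (∃ n : ℕ, B = szVer PL1 n ∨ B = szVer PR1 n ∨ B = (szVer PL2 n)ᴴ ∨
        B = (szVer PR2 n)ᴴ ∨ B = szHL N w PL1 n ∨ B = szHR N w PR1 n) →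
      A * B = B * A) := by
  have hL1 := hPL1.coeff_mem hw hqd
  have hR1 := hPR1.coeff_mem hw hqd
  have hL2 := hPL2.conjTranspose_coeff_mem hw hqd
  have hR2 := hPR2.conjTranspose_coeff_mem hw hqd
  have hpoly : ∀ A, (∃ n : ℕ, ∃ z : ℂ, A = mPolyEval (PL1 n) n z ∨ A = mPolyEval (PR1 n) n z ∨
      A = mRecipEval (PL2 n) n z ∨ A = mRecipEval (PR2 n) n z) → A ∈ weightBicommutant N w := by
    rintro A ⟨n, z, rfl | rfl | rfl | rfl⟩
    exacts [mPolyEval_mem (hL1 n) n z, mPolyEval_mem (hR1 n) n z, mRecipEval_mem (hL2 n) n z,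
      mRecipEval_mem (hR2 n) n z]
  have hverb : ∀ A, (∃ n : ℕ, A = szVer PL1 n ∨ A = szVer PR1 n ∨ A = (szVer PL2 n)ᴴ ∨
      A = (szVer PR2 n)ᴴ ∨ A = szHL N w PL1 n ∨ A = szHR N w PR1 n) →
      A ∈ weightBicommutant N w := by
    rintro A ⟨n, rfl | rfl | rfl | rfl | rfl | rfl⟩
    exacts [mPolyEval_mem (hL1 n) n 0, mPolyEval_mem (hR1 n) n 0, conjTranspose_szVer_mem (hL2 n),
      conjTranspose_szVer_mem (hR2 n), szHL_mem hw (hL1 n), szHR_mem hw (hR1 n)]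
  refine ⟨fun i j => ?_, fun A B hA hB => ?_, fun A B hA hB => ?_⟩
  · exact weightBicommutant_comm hcomm (mMoment_mem_weightBicommutant hw i)
      (mMoment_mem_weightBicommutant hw j)
  · exact weightBicommutant_comm hcomm (hpoly A hA) (hpoly B hB)
  · exact weightBicommutant_comm hcomm (hverb A hA) (hverb B hB)

/-- if the values of the weight pairwise commute, then the moments,
the Szegő and reciprocal polynomials, and the Verblunsky and quasi-tau matrices all
form pairwise commuting families. -/
theorem statement5 {N : ℕ} (hN : 1 ≤ N) (w : ℂ → Matrix (Fin N) (Fin N) ℂ)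
    (hw : Continuous w) (hqd : QuasiDef N w)
    (PL1 PR1 PL2 PR2 : ℕ → ℕ → Matrix (Fin N) (Fin N) ℂ)
    (hPL1 : IsSzPL1 N w PL1) (hPR1 : IsSzPR1 N w PR1)
    (hPL2 : IsSzPL2 N w PL2) (hPR2 : IsSzPR2 N w PR2)
    (hcomm : ∀ u v : ℂ, ‖u‖ = 1 → ‖v‖ = 1 → w u * w v = w v * w u) :
    (∀ i j : ℤ, mMoment N w i * mMoment N w j = mMoment N w j * mMoment N w i) ∧
    (∀ A B : Matrix (Fin N) (Fin N) ℂ,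
      (∃ n : ℕ, ∃ z : ℂ, A = mPolyEval (PL1 n) n z ∨ A = mPolyEval (PR1 n) n z ∨
        A = mRecipEval (PL2 n) n z ∨ A = mRecipEval (PR2 n) n z) →
      (∃ n : ℕ, ∃ z : ℂ, B = mPolyEval (PL1 n) n z ∨ B = mPolyEval (PR1 n) n z ∨
        B = mRecipEval (PL2 n) n z ∨ B = mRecipEval (PR2 n) n z) →
      A * B = B * A) ∧
    (∀ A B : Matrix (Fin N) (Fin N) ℂ,
      (∃ n : ℕ, A = szVer PL1 n ∨ A = szVer PR1 n ∨ A = (szVer PL2 n)ᴴ ∨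
        A = (szVer PR2 n)ᴴ ∨ A = szHL N w PL1 n ∨ A = szHR N w PR1 n) →
      (∃ n : ℕ, B = szVer PL1 n ∨ B = szVer PR1 n ∨ B = (szVer PL2 n)ᴴ ∨
        B = (szVer PR2 n)ᴴ ∨ B = szHL N w PL1 n ∨ B = szHR N w PR1 n) →
      A * B = B * A) :=
  statement5_general w hw hqd PL1 PR1 PL2 PR2 hPL1 hPR1 hPL2 hPR2 hcomm
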